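/- arXiv:1410.2126 — 2 statements merged into one kernel-verified Lean document; each statement's English description precedes it below -/
import Mathlib

section
/- (Symmetry of values, main theorem.) For every fractional ideal I of O and every v ∈ ℤ^p, one has v ∈ val(I^∨) if and only if Δ(γ − v − 1, val(I)) = ∅. -/
/-!
Put `c = γ - v`. Since `I^∨ ∩ t^w·O~ = (I + t^{γ-w}·O~)^∨`, and a complex vector space is not a
finite union of proper subspaces, `v ∈ val(I^∨)` means that for every `i` the inclusion
`(I + t^c·O~)^∨ ⊆ (I + t^{c-e_i}·O~)^∨` is strict. Both `I + t^c·O~` and `I + t^{c-e_i}·O~` are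
fractional ideals, so by reflexivity this says `t^{c-e_i}·O~ ⊄ I + t^c·O~`. As
`t^{c-e_i}·O~ / t^c·O~` is one-dimensional, the inclusion `t^{c-e_i}·O~ ⊆ I + t^c·O~` holds iff `I`
has an element `g ∈ t^{c-e_i}·O~` with `val_i g = c_i - 1`; adding to `g` a generic multiple of a
non-zerodivisor of `I ∩ t^c·O~` makes all its components nonzero, and then
`val g ∈ Δ_i(c - 1, val I)`.
-/

open scoped Classical

set_option synthInstance.maxHeartbeats 1000000
set_option maxHeartbeats 1000000

noncomputable section

/-- `K`, the total ring of fractions: the product of `p` copies of the field of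
formal Laurent series over `ℂ`. -/
abbrev KK (p : ℕ) : Type := Fin p → LaurentSeries ℂ

lemma algebraMap_component {p : ℕ} (c : ℂ) (i : Fin p) :
    algebraMap ℂ (KK p) c i = HahnSeries.single (0:ℤ) c := by
  rw [Pi.algebraMap_apply, HahnSeries.algebraMap_apply', PowerSeries.algebraMap_apply,
      Algebra.algebraMap_self_apply, HahnSeries.ofPowerSeries_C, HahnSeries.C_apply]

lemma smul_eq_algebraMap_mul {p : ℕ} (c : ℂ) (x : KK p) :
    c • x = algebraMap ℂ (KK p) c * x := by
  funext i
  rw [Pi.smul_apply, Pi.mul_apply, algebraMap_component,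
      HahnSeries.single_zero_mul_eq_smul]

/-- The `t`-adic order of a Laurent series, with `⊤` for the zero series. -/
def valC (g : LaurentSeries ℂ) : WithTop ℤ :=
  if g = 0 then ⊤ else (g.order : WithTop ℤ)

/-- The value vector `val(g) = (val_1 g, …, val_p g)`. -/
def valVec {p : ℕ} (g : KK p) : Fin p → WithTop ℤ := fun i => valC (g i)

/-- The set `t^α·O~` of tuples of Laurent series whose `i`-th component has all
coefficients in degrees below `α i` equal to zero (equivalently, whose `i`-th
component has `t`-adic order at least `α i`), as a `ℂ`-submodule of `K`.
For `α = 0` this is `O~` itself. -/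
def stdMod (p : ℕ) (α : Fin p → ℤ) : Submodule ℂ (KK p) where
  carrier := {g | ∀ i, ∀ j : ℤ, j < α i → (g i).coeff j = 0}
  add_mem' := by
    intro a b ha hb i j hj
    simp [HahnSeries.coeff_add, ha i j hj, hb i j hj]
  zero_mem' := by
    intro i j hj
    simp
  smul_mem' := by
    intro c a ha i j hj
    simp [HahnSeries.coeff_smul, ha i j hj]

/-- The dual `S^∨ = {h ∈ K : h·S ⊆ O}` of a subset `S ⊆ K`, as a
`ℂ`-submodule of `K`. -/
def dualMod {p : ℕ} (O : Subalgebra ℂ (KK p)) (S : Set (KK p)) :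
    Submodule ℂ (KK p) where
  carrier := {h | ∀ g ∈ S, h * g ∈ O}
  add_mem' := by
    intro a b ha hb g hg
    simpa [add_mul] using add_mem (ha g hg) (hb g hg)
  zero_mem' := by
    intro g hg
    simpa using O.zero_mem
  smul_mem' := by
    intro c a ha g hg
    rw [smul_eq_algebraMap_mul, mul_assoc]
    exact O.mul_mem (O.algebraMap_mem c) (ha g hg)

/-- `val(S)`: values of the non-zerodivisors of `K` (elements all of whose
components are nonzero) belonging to `S`. -/
def vals {p : ℕ} (S : Set (KK p)) : Set (Fin p → ℤ) :=
  {v | ∃ g ∈ S, ∀ i, valC (g i) = (v i : WithTop ℤ)}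

/-- `valbar(S)`: values of all elements of `S`. -/
def valsBar {p : ℕ} (S : Set (KK p)) : Set (Fin p → WithTop ℤ) :=
  {v | ∃ g ∈ S, ∀ i, valC (g i) = v i}

/-- `I` is a fractional ideal of `O`: an `O`-stable `ℂ`-submodule of `K` which
is finitely generated over `O` and contains a non-zerodivisor of `K`. -/
def IsFracIdeal {p : ℕ} (O : Subalgebra ℂ (KK p)) (I : Submodule ℂ (KK p)) : Prop :=
  (∀ a ∈ O, ∀ x ∈ I, a * x ∈ I) ∧
  (∃ s : Finset (KK p), (↑s : Set (KK p)) ⊆ (I : Set (KK p)) ∧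
    ∀ x ∈ I, ∃ a : KK p → KK p, (∀ g ∈ s, a g ∈ O) ∧ x = ∑ g ∈ s, a g * g) ∧
  (∃ g ∈ I, ∀ i, g i ≠ 0)

/-- `Δ_i(v, M)`. -/
def DeltaI {p : ℕ} (i : Fin p) (v : Fin p → ℤ) (M : Set (Fin p → ℤ)) :
    Set (Fin p → ℤ) :=
  {α ∈ M | α i = v i ∧ ∀ j, j ≠ i → v j < α j}

/-- `Δ(v, M) = ⋃ i, Δ_i(v, M)`. -/
def DeltaSet {p : ℕ} (v : Fin p → ℤ) (M : Set (Fin p → ℤ)) : Set (Fin p → ℤ) :=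
  ⋃ i : Fin p, DeltaI i v M

/-- `Λ_i(v, M)`. -/
def LamSet {p : ℕ} (i : Fin p) (v : Fin p → ℤ) (M : Set (Fin p → ℤ)) :
    Set (Fin p → ℤ) :=
  {α ∈ M | α i = v i ∧ v ≤ α}

/-- `dim_ℂ (B / A)`: the dimension of the image of `B` in `K ⧸ A`
(which is canonically `B/(A ∩ B)`). -/
def qdim {p : ℕ} (A B : Submodule ℂ (KK p)) : ℕ :=
  Module.finrank ℂ ↥(B.map A.mkQ)

/-- `c_I(v) = dim_ℂ (I_v / I_{v+1})`, where `I_v = {g ∈ I : val g ≥ v}`. -/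
def cI {p : ℕ} (I : Submodule ℂ (KK p)) (v : Fin p → ℤ) : ℕ :=
  qdim (I ⊓ stdMod p (v + 1)) (I ⊓ stdMod p v)

/-- `α_I(v) = Σ_{J ⊆ {1,…,p}} (−1)^{p−|J|} c_I(v − e_J)`. -/
def alphaI {p : ℕ} (I : Submodule ℂ (KK p)) (v : Fin p → ℤ) : ℤ :=
  ∑ J : Finset (Fin p),
    (-1 : ℤ) ^ (p - J.card) * cI I (fun j => v j - if j ∈ J then 1 else 0)

/-- `O` itself, as a `ℂ`-submodule of `K`. -/
def algSubmodule {p : ℕ} (O : Subalgebra ℂ (KK p)) : Submodule ℂ (KK p) where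
  carrier := O
  add_mem' := fun ha hb => O.add_mem ha hb
  zero_mem' := O.zero_mem
  smul_mem' := fun c x hx => by
    rw [smul_eq_algebraMap_mul]
    exact O.mul_mem (O.algebraMap_mem c) hx

theorem LaurentSeries.le_orderTop_sub_sum_single {R : Type*} [Ring R] {z : LaurentSeries R}
    {c : ℤ} (hz : (c : WithTop ℤ) ≤ z.orderTop) (d : ℤ) :
    (d : WithTop ℤ) ≤ (z - ∑ j ∈ Finset.Ico c d, HahnSeries.single j (z.coeff j)).orderTop := by
  refine HahnSeries.le_orderTop_iff_forall.mpr fun k hk => ?_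
  have hkd : k < d := by exact_mod_cast hk
  rw [HahnSeries.coeff_sub, HahnSeries.coeff_sum, sub_eq_zero]
  by_cases hck : c ≤ k
  · rw [Finset.sum_eq_single_of_mem k (Finset.mem_Ico.mpr ⟨hck, hkd⟩) fun j _ hjk => by
      rw [HahnSeries.coeff_single, if_neg (Ne.symm hjk)], HahnSeries.coeff_single, if_pos rfl]
  · rw [Finset.sum_eq_zero fun j hj => by
      rw [HahnSeries.coeff_single, if_neg (by grind)]]
    exact HahnSeries.coeff_eq_zero_of_lt_orderTop
      (lt_of_lt_of_le (by exact_mod_cast (by omega : k < c)) hz)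

theorem exists_forall_add_smul_ne_zero {K M ι : Type*} [DivisionRing K] [Infinite K]
    [AddCommGroup M] [Module K M] [Finite ι] (g f : ι → M) (hf : ∀ i, f i ≠ 0) :
    ∃ a : K, ∀ i, g i + a • f i ≠ 0 := by
  have hbad : (⋃ i, {a : K | g i + a • f i = 0}).Finite := by
    refine Set.finite_iUnion fun i => Set.Subsingleton.finite fun a ha b hb => ?_
    have hab : (a - b) • f i = 0 := by
      rw [sub_smul, ← add_sub_add_left_eq_sub _ _ (g i), ha, hb, sub_zero]
    exact sub_eq_zero.mp ((smul_eq_zero.mp hab).resolve_right (hf i))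
  obtain ⟨a, ha⟩ := hbad.infinite_compl.nonempty
  exact ⟨a, by simpa using ha⟩

theorem Submodule.exists_forall_notMem_of_forall_not_le {k E ι : Type*} [DivisionRing k]
    [Infinite k] [AddCommGroup E] [Module k E] [Finite ι] {W : Submodule k E}
    {f : ι → Submodule k E} (h : ∀ i, ¬ W ≤ f i) : ∃ x ∈ W, ∀ i, x ∉ f i := by
  by_contra! hcov
  obtain ⟨i, hi⟩ := Subspace.exists_eq_top_of_iUnion_eq_univ
    (p := fun i => (f i).comap W.subtype) <| Set.eq_univ_of_forall fun x =>
      Set.mem_iUnion.mpr (hcov x x.2)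
  exact h i fun x hx => (hi ▸ Submodule.mem_top : (⟨x, hx⟩ : W) ∈ (f i).comap W.subtype)

section StdMod

variable {p : ℕ}

theorem valC_eq_orderTop (g : LaurentSeries ℂ) : valC g = g.orderTop := by
  unfold valC
  split_ifs with h
  · rw [h, HahnSeries.orderTop_zero]
  · exact HahnSeries.order_eq_orderTop_of_ne_zero h

theorem mem_stdMod_iff {α : Fin p → ℤ} {g : KK p} :
    g ∈ stdMod p α ↔ ∀ i, (α i : WithTop ℤ) ≤ (g i).orderTop :=
  forall_congr' fun _ => by simp only [HahnSeries.le_orderTop_iff_forall, WithTop.coe_lt_coe]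

theorem stdMod_anti {α β : Fin p → ℤ} (h : α ≤ β) : stdMod p β ≤ stdMod p α :=
  fun _ hg => mem_stdMod_iff.mpr fun i =>
    (WithTop.coe_le_coe.mpr (h i)).trans (mem_stdMod_iff.mp hg i)

theorem mul_mem_stdMod {α β : Fin p → ℤ} {f g : KK p} (hf : f ∈ stdMod p α)
    (hg : g ∈ stdMod p β) : f * g ∈ stdMod p (α + β) :=
  mem_stdMod_iff.mpr fun i => by
    simpa using (add_le_add (mem_stdMod_iff.mp hf i) (mem_stdMod_iff.mp hg i)).trans
      HahnSeries.orderTop_add_le_mul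

theorem one_mem_stdMod_zero : (1 : KK p) ∈ stdMod p 0 :=
  mem_stdMod_iff.mpr fun i => by simp [HahnSeries.orderTop_one]

theorem notMem_stdMod_add_single_iff {w : Fin p → ℤ} {g : KK p} (hg : g ∈ stdMod p w)
    (i : Fin p) : g ∉ stdMod p (w + Pi.single i 1) ↔ (g i).orderTop = w i := by
  rw [mem_stdMod_iff] at hg ⊢
  constructor
  · intro h
    obtain ⟨j, hj⟩ := not_forall.mp h
    obtain rfl : j = i := by
      by_contra hji
      simp [Pi.single_eq_of_ne hji, hg j] at hj
    have hle := hg j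
    simp only [Pi.add_apply, Pi.single_eq_same, not_le] at hj
    generalize (g j).orderTop = x at hj hle ⊢
    cases x with
    | top => simp at hj
    | coe n => norm_cast at hj hle ⊢; omega
  · intro h hle
    have := hle i
    simp only [Pi.add_apply, Pi.single_eq_same, h, WithTop.coe_le_coe] at this
    omega

theorem notMem_stdMod_iff_of_mem_sub_single {c : Fin p → ℤ} {i : Fin p} {g : KK p}
    (hg : g ∈ stdMod p (c - Pi.single i 1)) : g ∉ stdMod p c ↔ (g i).orderTop = c i - 1 := by
  simpa using notMem_stdMod_add_single_iff hg i

def tpow (α : Fin p → ℤ) : KK p := fun i => HahnSeries.single (α i) 1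

theorem tpow_apply_ne_zero (α : Fin p → ℤ) (i : Fin p) : tpow α i ≠ 0 :=
  HahnSeries.single_ne_zero one_ne_zero

theorem tpow_mem_stdMod (α : Fin p → ℤ) : tpow α ∈ stdMod p α :=
  mem_stdMod_iff.mpr fun _ => HahnSeries.orderTop_single_le

theorem tpow_mul_tpow_neg (α : Fin p → ℤ) : tpow α * tpow (-α) = 1 := by
  funext i
  simp [tpow, HahnSeries.single_mul_single]

end StdMod

section Duality

variable {p : ℕ} {O : Subalgebra ℂ (KK p)}

theorem dualMod_anti {S T : Set (KK p)} (h : S ⊆ T) : dualMod O T ≤ dualMod O S :=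
  fun _ hx g hg => hx g (h hg)

theorem dualMod_sup (A B : Submodule ℂ (KK p)) :
    dualMod O ((A ⊔ B : Submodule ℂ (KK p)) : Set (KK p)) = dualMod O A ⊓ dualMod O B := by
  refine le_antisymm (le_inf (dualMod_anti (SetLike.coe_subset_coe.mpr le_sup_left))
    (dualMod_anti (SetLike.coe_subset_coe.mpr le_sup_right))) ?_
  rintro h ⟨hA, hB⟩ g hg
  obtain ⟨x, hx, y, hy, rfl⟩ := Submodule.mem_sup.mp hg
  rw [mul_add]
  exact O.add_mem (hA x hx) (hB y hy)

theorem dualMod_le_dualMod_iff {A B : Submodule ℂ (KK p)}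
    (hA : dualMod O (dualMod O (A : Set (KK p)) : Set (KK p)) = A)
    (hB : dualMod O (dualMod O (B : Set (KK p)) : Set (KK p)) = B) :
    dualMod O (A : Set (KK p)) ≤ dualMod O B ↔ B ≤ A := by
  refine ⟨fun h => ?_, fun h => dualMod_anti (SetLike.coe_subset_coe.mpr h)⟩
  rw [← hA, ← hB]
  exact dualMod_anti (SetLike.coe_subset_coe.mpr h)

variable {γ : Fin p → ℤ}

theorem stdMod_subset_of_dualMod_eq (hγ : dualMod O (stdMod p 0 : Set (KK p)) = stdMod p γ) :
    (stdMod p γ : Set (KK p)) ⊆ O := fun h hh => by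
  rw [← hγ] at hh
  simpa using hh 1 one_mem_stdMod_zero

theorem dualMod_stdMod (hγ : dualMod O (stdMod p 0 : Set (KK p)) = stdMod p γ)
    (a : Fin p → ℤ) : dualMod O (stdMod p a : Set (KK p)) = stdMod p (γ - a) := by
  ext h
  constructor
  · intro hh
    have hmul : h * tpow a ∈ stdMod p γ := by
      rw [← hγ]
      intro g hg
      rw [mul_assoc]
      exact hh _ (by simpa using mul_mem_stdMod (tpow_mem_stdMod a) hg)
    have := mul_mem_stdMod hmul (tpow_mem_stdMod (-a))
    rwa [mul_assoc, tpow_mul_tpow_neg, mul_one, ← sub_eq_add_neg] at this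
  · intro hh g hg
    apply stdMod_subset_of_dualMod_eq hγ
    simpa using mul_mem_stdMod hh hg

theorem dualMod_inf_stdMod (hγ : dualMod O (stdMod p 0 : Set (KK p)) = stdMod p γ)
    (I : Submodule ℂ (KK p)) (w : Fin p → ℤ) :
    dualMod O (I : Set (KK p)) ⊓ stdMod p w =
      dualMod O ((I ⊔ stdMod p (γ - w) : Submodule ℂ (KK p)) : Set (KK p)) := by
  rw [dualMod_sup, dualMod_stdMod hγ, sub_sub_cancel]

end Duality

section FracIdeal

variable {p : ℕ} {O : Subalgebra ℂ (KK p)}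

theorem exists_sum_mul_iff_mem_span (s : Finset (KK p)) (x : KK p) :
    (∃ a : KK p → KK p, (∀ g ∈ s, a g ∈ O) ∧ x = ∑ g ∈ s, a g * g) ↔
      x ∈ Submodule.span O (s : Set (KK p)) := by
  constructor
  · rintro ⟨a, ha, rfl⟩
    exact Submodule.sum_mem _ fun g hg =>
      Submodule.smul_mem _ (⟨a g, ha g hg⟩ : O) (Submodule.subset_span hg)
  · intro hx
    obtain ⟨f, -, rfl⟩ := Submodule.mem_span_finset.mp hx
    exact ⟨fun g => f g, fun g _ => (f g).2, rfl⟩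

theorem complex_smul_mem_span {s : Set (KK p)} {x : KK p}
    (hx : x ∈ Submodule.span O s) (a : ℂ) : a • x ∈ Submodule.span O s := by
  rw [smul_eq_algebraMap_mul]
  exact Submodule.smul_mem _ (⟨_, O.algebraMap_mem a⟩ : O) hx

theorem piSingle_mem_stdMod {c : Fin p → ℤ} {i : Fin p} {z : LaurentSeries ℂ}
    (hz : (c i : WithTop ℤ) ≤ z.orderTop) : Pi.single i z ∈ stdMod p c := by
  refine mem_stdMod_iff.mpr fun j => ?_
  rcases eq_or_ne j i with rfl | hji
  · simpa using hz
  · simp [Pi.single_eq_of_ne hji]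

def stdModGens (γ c : Fin p → ℤ) : Finset (KK p) :=
  insert (tpow c) (Finset.univ.biUnion fun i =>
    (Finset.Ico (c i) (c i + γ i)).image fun j => Pi.single i (HahnSeries.single j 1))

theorem stdModGens_subset (γ c : Fin p → ℤ) :
    (stdModGens γ c : Set (KK p)) ⊆ stdMod p c := by
  intro g hg
  simp only [stdModGens, Finset.coe_insert, Finset.coe_biUnion, Finset.coe_image,
    Set.mem_insert_iff, Set.mem_iUnion, Set.mem_image, Finset.mem_coe, Finset.mem_Ico] at hg
  obtain rfl | ⟨i, -, j, hj, rfl⟩ := hg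
  · exact tpow_mem_stdMod c
  · exact piSingle_mem_stdMod (HahnSeries.orderTop_single_le.trans' (by exact_mod_cast hj.1))

theorem stdMod_subset_span_stdModGens {γ : Fin p → ℤ} (hγO : (stdMod p γ : Set (KK p)) ⊆ O)
    (c : Fin p → ℤ) :
    (stdMod p c : Set (KK p)) ⊆ Submodule.span O (stdModGens γ c : Set (KK p)) := by
  intro y hy
  -- `y` is its truncation `T` below `c + γ` plus an `O`-multiple of `t^c`
  set T : KK p := fun i =>
    ∑ j ∈ Finset.Ico (c i) (c i + γ i), HahnSeries.single j ((y i).coeff j) with hT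
  have hrest : (y - T) * tpow (-c) ∈ O := by
    refine hγO ?_
    have hyT : y - T ∈ stdMod p (c + γ) := mem_stdMod_iff.mpr fun i =>
      LaurentSeries.le_orderTop_sub_sum_single (mem_stdMod_iff.mp hy i) _
    simpa using mul_mem_stdMod hyT (tpow_mem_stdMod (-c))
  have hTmem : T ∈ Submodule.span O (stdModGens γ c : Set (KK p)) := by
    rw [← Finset.univ_sum_single T]
    refine Submodule.sum_mem _ fun i _ => ?_
    rw [hT, ← AddMonoidHom.single_apply, map_sum]
    refine Submodule.sum_mem _ fun j hj => ?_
    have hgen : Pi.single i (HahnSeries.single j 1) ∈ stdModGens γ c :=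
      Finset.mem_insert_of_mem (Finset.mem_biUnion.mpr
        ⟨i, Finset.mem_univ i, Finset.mem_image_of_mem _ hj⟩)
    have hsingle : HahnSeries.single j ((y i).coeff j) =
        (y i).coeff j • HahnSeries.single j (1 : ℂ) := by
      rw [← HahnSeries.single_zero_mul_eq_smul, HahnSeries.single_mul_single, zero_add, mul_one]
    convert complex_smul_mem_span (Submodule.subset_span hgen) ((y i).coeff j) using 1
    ext i' : 1
    rcases eq_or_ne i' i with rfl | hi'
    · simp [hsingle]
    · simp [Pi.single_eq_of_ne hi']
  have hyT : y = T + (y - T) * tpow (-c) * tpow c := by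
    rw [mul_assoc, mul_comm (tpow (-c)), tpow_mul_tpow_neg, mul_one, add_sub_cancel]
  rw [hyT]
  exact Submodule.add_mem _ hTmem (Submodule.smul_mem _ (⟨_, hrest⟩ : O)
    (Submodule.subset_span (Finset.mem_insert_self _ _)))

theorem IsFracIdeal.sup_stdMod {γ : Fin p → ℤ} (hO : (O : Set (KK p)) ⊆ stdMod p 0)
    (hγO : (stdMod p γ : Set (KK p)) ⊆ O) {I : Submodule ℂ (KK p)} (hI : IsFracIdeal O I)
    (c : Fin p → ℤ) : IsFracIdeal O (I ⊔ stdMod p c) := by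
  obtain ⟨hstab, ⟨s, hsI, hgen⟩, hnzd⟩ := hI
  refine ⟨fun a ha x hx => ?_, ⟨s ∪ stdModGens γ c, ?_, fun x hx => ?_⟩,
    hnzd.imp fun f hf => ⟨Submodule.mem_sup_left hf.1, hf.2⟩⟩
  · obtain ⟨z, hz, y, hy, rfl⟩ := Submodule.mem_sup.mp hx
    rw [mul_add]
    exact Submodule.add_mem _ (Submodule.mem_sup_left (hstab a ha z hz))
      (Submodule.mem_sup_right (by simpa using mul_mem_stdMod (hO ha) hy))
  · rw [Finset.coe_union]
    exact Set.union_subset (hsI.trans fun _ => Submodule.mem_sup_left)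
      ((stdModGens_subset γ c).trans fun _ => Submodule.mem_sup_right)
  · rw [exists_sum_mul_iff_mem_span]
    obtain ⟨z, hz, y, hy, rfl⟩ := Submodule.mem_sup.mp hx
    rw [Finset.coe_union]
    exact Submodule.add_mem _
      (Submodule.span_mono Set.subset_union_left
        ((exists_sum_mul_iff_mem_span _ _).mp (hgen z hz)))
      (Submodule.span_mono Set.subset_union_right (stdMod_subset_span_stdModGens hγO c hy))

end FracIdeal

section Values

variable {p : ℕ} {O : Subalgebra ℂ (KK p)} {γ : Fin p → ℤ} {I : Submodule ℂ (KK p)}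

theorem mem_vals_iff_forall_not_le (M : Submodule ℂ (KK p)) (v : Fin p → ℤ) :
    v ∈ vals (M : Set (KK p)) ↔
      ∀ i, ¬ M ⊓ stdMod p v ≤ M ⊓ stdMod p (v + Pi.single i 1) := by
  simp only [vals, valC_eq_orderTop, Set.mem_ofPred_eq]
  constructor
  · rintro ⟨g, hgM, hg⟩ i hle
    have hgv : g ∈ stdMod p v := mem_stdMod_iff.mpr fun j => (hg j).ge
    exact (notMem_stdMod_add_single_iff hgv i).mpr (hg i) (hle ⟨hgM, hgv⟩).2
  · intro h
    obtain ⟨g, ⟨hgM, hgv⟩, hg⟩ := Submodule.exists_forall_notMem_of_forall_not_le h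
    exact ⟨g, hgM, fun i =>
      (notMem_stdMod_add_single_iff hgv i).mp fun hgi => hg i ⟨hgM, hgi⟩⟩

theorem exists_mem_inf_stdMod_forall_ne_zero (hstab : ∀ a ∈ O, ∀ x ∈ I, a * x ∈ I)
    (hγO : (stdMod p γ : Set (KK p)) ⊆ O) {f : KK p} (hfI : f ∈ I) (hf : ∀ i, f i ≠ 0)
    (c : Fin p → ℤ) : ∃ f' ∈ I ⊓ stdMod p c, ∀ i, f' i ≠ 0 := by
  set o : Fin p → ℤ := fun i => (f i).order
  set m : Fin p → ℤ := γ ⊔ (c - o)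
  have hfo : f ∈ stdMod p o := mem_stdMod_iff.mpr fun i =>
    (HahnSeries.order_eq_orderTop_of_ne_zero (hf i)).le
  have hcm : c ≤ m + o := fun i => by
    have := le_max_right (γ i) (c i - o i)
    simp only [m, Pi.add_apply, Pi.sup_apply, Pi.sub_apply] at this ⊢
    omega
  refine ⟨tpow m * f, ⟨hstab _ (hγO (stdMod_anti le_sup_left (tpow_mem_stdMod m))) f hfI,
    stdMod_anti hcm (mul_mem_stdMod (tpow_mem_stdMod m) hfo)⟩,
    fun i => mul_ne_zero (tpow_apply_ne_zero m i) (hf i)⟩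

theorem exists_forall_ne_zero_sub_mem_stdMod (hstab : ∀ a ∈ O, ∀ x ∈ I, a * x ∈ I)
    (hγO : (stdMod p γ : Set (KK p)) ⊆ O) (hnzd : ∃ f ∈ I, ∀ i, f i ≠ 0) {x : KK p}
    (hx : x ∈ I) (c : Fin p → ℤ) : ∃ g ∈ I, (∀ i, g i ≠ 0) ∧ g - x ∈ stdMod p c := by
  obtain ⟨f, hfI, hf⟩ := hnzd
  obtain ⟨f', ⟨hf'I, hf'c⟩, hf'⟩ := exists_mem_inf_stdMod_forall_ne_zero hstab hγO hfI hf c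
  obtain ⟨a, ha⟩ := exists_forall_add_smul_ne_zero (K := ℂ) x f' hf'
  refine ⟨x + a • f', I.add_mem hx (I.smul_mem a hf'I), ha, ?_⟩
  rw [add_sub_cancel_left]
  exact Submodule.smul_mem _ a hf'c

theorem deltaI_nonempty_iff (hstab : ∀ a ∈ O, ∀ x ∈ I, a * x ∈ I)
    (hγO : (stdMod p γ : Set (KK p)) ⊆ O) (hnzd : ∃ f ∈ I, ∀ i, f i ≠ 0) (c : Fin p → ℤ)
    (i : Fin p) : (DeltaI i (c - 1) (vals (I : Set (KK p)))).Nonempty ↔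
      ∃ g ∈ I, g ∈ stdMod p (c - Pi.single i 1) ∧ g ∉ stdMod p c := by
  constructor
  · rintro ⟨α, ⟨g, hgI, hg⟩, hαi, hαj⟩
    simp only [valC_eq_orderTop] at hg
    have hgw : g ∈ stdMod p (c - Pi.single i 1) := mem_stdMod_iff.mpr fun j => by
      rw [hg j, WithTop.coe_le_coe]
      rcases eq_or_ne j i with rfl | hji
      · simp [hαi]
      · have := hαj j hji
        simp only [Pi.sub_apply, Pi.one_apply, Pi.single_eq_of_ne hji] at this ⊢
        omega
    refine ⟨g, hgI, hgw, (notMem_stdMod_iff_of_mem_sub_single hgw).mpr ?_⟩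
    rw [hg i, hαi]
    simp
  · rintro ⟨g, hgI, hgw, hgc⟩
    obtain ⟨g', hg'I, hg', hg'c⟩ := exists_forall_ne_zero_sub_mem_stdMod hstab hγO hnzd hgI c
    have hg'w : g' ∈ stdMod p (c - Pi.single i 1) := by
      rw [← add_sub_cancel g g']
      refine add_mem hgw (stdMod_anti ?_ hg'c)
      simp
    have hg'c : g' ∉ stdMod p c := fun h => hgc (by simpa using sub_mem h hg'c)
    have hord : ∀ j, (g' j).orderTop = (g' j).order := fun j =>
      (HahnSeries.order_eq_orderTop_of_ne_zero (hg' j)).symm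
    rw [notMem_stdMod_iff_of_mem_sub_single hg'w, hord] at hg'c
    have hi : (g' i).order = c i - 1 := by exact_mod_cast hg'c
    refine ⟨fun j => (g' j).order, ⟨g', hg'I, fun j => by rw [valC_eq_orderTop, hord]⟩,
      by simpa using hi, fun j hji => ?_⟩
    have := mem_stdMod_iff.mp hg'w j
    rw [hord, WithTop.coe_le_coe] at this
    simp only [Pi.sub_apply, Pi.one_apply, Pi.single_eq_of_ne hji] at this ⊢
    omega

theorem stdMod_sub_single_le_sup_iff (c : Fin p → ℤ) (i : Fin p) :
    stdMod p (c - Pi.single i 1) ≤ I ⊔ stdMod p c ↔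
      ∃ g ∈ I, g ∈ stdMod p (c - Pi.single i 1) ∧ g ∉ stdMod p c := by
  constructor
  · intro hle
    have ht := tpow_mem_stdMod (c - Pi.single i 1)
    obtain ⟨x, hx, s, hs, hxs⟩ := Submodule.mem_sup.mp (hle ht)
    refine ⟨x, hx, ?_, fun hxc => ?_⟩
    · rw [eq_sub_of_add_eq hxs]
      exact sub_mem ht (stdMod_anti (by simp) hs)
    · have htc : tpow (c - Pi.single i 1) ∈ stdMod p c := hxs ▸ add_mem hxc hs
      exact (notMem_stdMod_iff_of_mem_sub_single ht).mpr
        (by simp [tpow, HahnSeries.orderTop_single]) htc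
  · rintro ⟨g, hgI, hgw, hgc⟩ y hyw
    rw [notMem_stdMod_iff_of_mem_sub_single hgw] at hgc
    have hg0 := HahnSeries.coeff_orderTop_ne hgc
    set b := (y i).coeff (c i - 1) / (g i).coeff (c i - 1)
    rw [← add_sub_cancel (b • g) y]
    refine Submodule.add_mem_sup (I.smul_mem b hgI) (not_not.mp fun hyc => ?_)
    rw [notMem_stdMod_iff_of_mem_sub_single (sub_mem hyw (Submodule.smul_mem _ b hgw))] at hyc
    apply HahnSeries.coeff_orderTop_ne hyc
    simp [b, hg0]

theorem sup_stdMod_sub_single_le_iff (hstab : ∀ a ∈ O, ∀ x ∈ I, a * x ∈ I)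
    (hγO : (stdMod p γ : Set (KK p)) ⊆ O) (hnzd : ∃ f ∈ I, ∀ i, f i ≠ 0) (c : Fin p → ℤ)
    (i : Fin p) : I ⊔ stdMod p (c - Pi.single i 1) ≤ I ⊔ stdMod p c ↔
      (DeltaI i (c - 1) (vals (I : Set (KK p)))).Nonempty := by
  rw [sup_le_iff, and_iff_right le_sup_left, stdMod_sub_single_le_sup_iff,
    deltaI_nonempty_iff hstab hγO hnzd]

end Values

theorem symmetry_of_values_general {p : ℕ} (O : Subalgebra ℂ (KK p))
    (hO : (O : Set (KK p)) ⊆ (stdMod p 0 : Set (KK p)))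
    (γ : Fin p → ℕ)
    (hγ : dualMod O (stdMod p 0 : Set (KK p)) = stdMod p (fun i => (γ i : ℤ)))
    (hG1 : ∀ I : Submodule ℂ (KK p), IsFracIdeal O I →
      dualMod O ((dualMod O (I : Set (KK p)) : Submodule ℂ (KK p)) : Set (KK p)) = I)
    (I : Submodule ℂ (KK p)) (hI : IsFracIdeal O I) (v : Fin p → ℤ) :
    v ∈ vals ((dualMod O (I : Set (KK p)) : Submodule ℂ (KK p)) : Set (KK p)) ↔
      DeltaSet (fun i => (γ i : ℤ) - v i - 1) (vals (I : Set (KK p))) = ∅ := by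
  have hγO := stdMod_subset_of_dualMod_eq hγ
  have hrefl : ∀ c, dualMod O (dualMod O ((I ⊔ stdMod p c : Submodule ℂ (KK p)) : Set (KK p)) :
      Set (KK p)) = I ⊔ stdMod p c := fun c => hG1 _ (hI.sup_stdMod hO hγO c)
  rw [mem_vals_iff_forall_not_le, DeltaSet, Set.iUnion_eq_empty]
  refine forall_congr' fun i => ?_
  rw [dualMod_inf_stdMod hγ, dualMod_inf_stdMod hγ, dualMod_le_dualMod_iff (hrefl _) (hrefl _),
    sub_add_eq_sub_sub, sup_stdMod_sub_single_le_iff hI.1 hγO hI.2.2,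
    Set.not_nonempty_iff_eq_empty]
  rfl

/-- **Symmetry of values** (main theorem).  For every fractional ideal `I` of `O`
and every `v ∈ ℤ^p`: `v ∈ val(I^∨)` iff `Δ(γ − v − 1, val I) = ∅`. -/
theorem symmetry_of_values {p : ℕ} (hp : 1 ≤ p) (O : Subalgebra ℂ (KK p))
    (hO : (O : Set (KK p)) ⊆ (stdMod p 0 : Set (KK p)))
    (γ : Fin p → ℕ)
    (hγ : dualMod O (stdMod p 0 : Set (KK p)) = stdMod p (fun i => (γ i : ℤ)))
    (hG1 : ∀ I : Submodule ℂ (KK p), IsFracIdeal O I →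
      dualMod O ((dualMod O (I : Set (KK p)) : Submodule ℂ (KK p)) : Set (KK p)) = I)
    (hG2 : ∀ I J : Submodule ℂ (KK p), IsFracIdeal O I → IsFracIdeal O J → I ≤ J →
      qdim I J = qdim (dualMod O (J : Set (KK p))) (dualMod O (I : Set (KK p))))
    (hG3 : DeltaSet (fun i => (γ i : ℤ) - 1) (vals (O : Set (KK p))) = ∅)
    (I : Submodule ℂ (KK p)) (hI : IsFracIdeal O I) (v : Fin p → ℤ) :
    v ∈ vals ((dualMod O (I : Set (KK p)) : Submodule ℂ (KK p)) : Set (KK p)) ↔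
      DeltaSet (fun i => (γ i : ℤ) - v i - 1) (vals (I : Set (KK p))) = ∅ :=
  symmetry_of_values_general O hO γ hγ hG1 I hI v
end
end

section
/- (Dimension along a chain.) Let I be a fractional ideal of O and ν, λ ∈ ℤ^p with t^ν·O~ ⊆ I ⊆ t^λ·O~. Let M ∈ ℕ and (α^{(j)})_{0 ≤ j ≤ M+1} be a finite sequence in ℤ^p with α^{(0)} = λ, α^{(M+1)} = ν, and such that for each j ∈ {0,…,M} there is i(j) ∈ {1,…,p} with α^{(j+1)} = α^{(j)} + e_{i(j)}. Then dim_ℂ(I / t^ν·O~) = Card{ j ∈ {0,…,M} : Λ_{i(j)}(α^{(j)}, val(I)) ≠ ∅ }. -/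
open scoped Classical

set_option synthInstance.maxHeartbeats 1000000
set_option maxHeartbeats 1000000

noncomputable section

/-!
Filter `I` by `N_j = I ∩ t^{α^{(j)}}·O~`. Since `α^{(j+1)} = α^{(j)} + e_i`, the step
`N_{j+1} ⊆ N_j` is cut out by the single linear condition "the coefficient of `t^{α^{(j)}_i}` in
the `i`-th component vanishes", so `N_j / N_{j+1}` has dimension one or zero, according as
some `g ∈ N_j` has that coefficient nonzero or not. Such a `g` can be made a non-zerodivisor
without changing its `i`-th component, by adding monomials of high order (which lie in
`t^ν·O~ ⊆ I`) to its vanishing components; its value then lies in `Λ_i(α^{(j)}, val I)`.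
Summing the steps from `N_0 = I` to `N_{M+1} = t^ν·O~` gives the count.
-/

theorem Submodule.rank_eq_rank_inf_ker_add {K V : Type*} [Field K] [AddCommGroup V]
    [Module K V] (W : Submodule K V) (f : V →ₗ[K] K) :
    Module.rank K W =
      Module.rank K ↥(W ⊓ LinearMap.ker f) + if ∃ w ∈ W, f w ≠ 0 then 1 else 0 := by
  have hrange : Module.rank K (W.map f) = if ∃ w ∈ W, f w ≠ 0 then 1 else 0 := by
    split_ifs with h
    · obtain ⟨w, hw, hfw⟩ := h
      rw [Ideal.eq_top_of_isUnit_mem _ (Submodule.mem_map_of_mem hw) hfw.isUnit, rank_top,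
        Module.rank_self]
    · rw [LinearMap.le_ker_iff_map.1 fun w hw ↦ not_not.1 fun hfw ↦ h ⟨w, hw, hfw⟩,
        rank_bot]
  have := (f.domRestrict W).lift_rank_range_add_rank_ker
  rw [LinearMap.ker_domRestrict, ← rank_map_eq W.injective_subtype,
    Submodule.map_comap_subtype, LinearMap.range_domRestrict, hrange, add_comm] at this
  apply Cardinal.lift_injective
  rw [← this, Cardinal.lift_add]
  split_ifs <;> simp

theorem Submodule.rank_map_mkQ_eq_rank_map_mkQ_inf_ker_add {K V : Type*} [Field K]
    [AddCommGroup V] [Module K V] (S W : Submodule K V) {f : V →ₗ[K] K}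
    (hS : S ≤ LinearMap.ker f) :
    Module.rank K (W.map S.mkQ) =
      Module.rank K ((W ⊓ LinearMap.ker f).map S.mkQ) +
        if ∃ w ∈ W, f w ≠ 0 then 1 else 0 := by
  have hker : (LinearMap.ker (S.liftQ f hS)).comap S.mkQ = LinearMap.ker f := by
    rw [← LinearMap.ker_comp, Submodule.liftQ_mkQ]
  have hex : (∃ w ∈ W.map S.mkQ, S.liftQ f hS w ≠ 0) ↔ ∃ w ∈ W, f w ≠ 0 := by
    simp
  rw [(W.map S.mkQ).rank_eq_rank_inf_ker_add (S.liftQ f hS),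
    Submodule.map_inf_eq_map_inf_comap, hker, hex]

theorem Submodule.rank_map_mkQ_eq_add_card {K V : Type*} [Field K] [AddCommGroup V]
    [Module K V] (S : Submodule K V) (Q : ℕ → Submodule K V) (f : ℕ → V →ₗ[K] K) {n : ℕ}
    (hS : ∀ j < n, S ≤ LinearMap.ker (f j))
    (hQ : ∀ j < n, Q (j + 1) = Q j ⊓ LinearMap.ker (f j)) :
    Module.rank K ((Q 0).map S.mkQ) =
      Module.rank K ((Q n).map S.mkQ) +
        ((Finset.range n).filter fun j ↦ ∃ w ∈ Q j, f j w ≠ 0).card := by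
  induction n with
  | zero => simp
  | succ n ih =>
    rw [ih (fun j hj ↦ hS j (by omega)) (fun j hj ↦ hQ j (by omega)),
      S.rank_map_mkQ_eq_rank_map_mkQ_inf_ker_add (Q n) (hS n n.lt_succ_self),
      ← hQ n n.lt_succ_self, Finset.range_add_one, Finset.filter_insert]
    split_ifs
    · rw [Finset.card_insert_of_notMem (by simp)]
      push_cast
      ring
    · rw [add_zero]

lemma stdMod_antitone {p : ℕ} {β γ : Fin p → ℤ} (h : β ≤ γ) : stdMod p γ ≤ stdMod p β :=
  fun _ hg i j hj ↦ hg i j (hj.trans_le (h i))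

def coeffAt (p : ℕ) (i : Fin p) (k : ℤ) : KK p →ₗ[ℂ] ℂ :=
  (HahnSeries.coeff.linearMap k).comp (LinearMap.proj i)

@[simp]
lemma coeffAt_apply {p : ℕ} (i : Fin p) (k : ℤ) (g : KK p) : coeffAt p i k g = (g i).coeff k :=
  rfl

lemma stdMod_add_single {p : ℕ} (β : Fin p → ℤ) (i : Fin p) :
    stdMod p (β + Pi.single i 1) = stdMod p β ⊓ LinearMap.ker (coeffAt p i (β i)) := by
  ext g
  simp only [Submodule.mem_inf, LinearMap.mem_ker, coeffAt_apply]
  constructor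
  · intro hg
    refine ⟨stdMod_antitone (le_add_of_nonneg_right (Pi.single_nonneg.2 zero_le_one)) hg,
      hg i (β i) (by simp)⟩
  · rintro ⟨hg, hgi⟩ k j hj
    by_cases hk : k = i
    · subst hk
      rcases (show j ≤ β k by simpa using hj).lt_or_eq with hlt | rfl
      exacts [hg k j hlt, hgi]
    · exact hg k j (by simpa [hk] using hj)

lemma stdMod_le_ker_coeffAt {p : ℕ} {ν : Fin p → ℤ} {i : Fin p} {k : ℤ} (hk : k < ν i) :
    stdMod p ν ≤ LinearMap.ker (coeffAt p i k) :=
  fun _ hg ↦ hg i k hk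

lemma chain_apply_lt_last {p M : ℕ} {α : ℕ → Fin p → ℤ} {ii : ℕ → Fin p}
    (hstep : ∀ j ≤ M, α (j + 1) = α j + Pi.single (ii j) 1) {j : ℕ} (hj : j ≤ M) :
    α j (ii j) < α (M + 1) (ii j) := by
  have hmono : MonotoneOn α (Set.Iic (M + 1)) :=
    monotoneOn_of_le_succ Set.ordConnected_Iic fun n _ _ hn ↦ by
      rw [Order.succ_eq_add_one] at hn ⊢
      rw [hstep n (by simpa using hn)]
      exact le_add_of_nonneg_right (Pi.single_nonneg.2 zero_le_one)
  calc α j (ii j) < α (j + 1) (ii j) := by simp [hstep j hj]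
    _ ≤ α (M + 1) (ii j) := hmono (by simpa using hj) (Set.mem_Iic.2 le_rfl) (by omega) (ii j)

lemma valC_eq_coe_iff {g : LaurentSeries ℂ} {m : ℤ} :
    valC g = m ↔ g ≠ 0 ∧ g.order = m := by
  unfold valC
  split_ifs with h <;> simp [h]

lemma lamSet_vals_nonempty_iff {p : ℕ} (S : Set (KK p)) (i : Fin p) (β : Fin p → ℤ) :
    (LamSet i β (vals S)).Nonempty ↔
      ∃ g ∈ S, g ∈ stdMod p β ∧ (∀ k, g k ≠ 0) ∧ (g i).coeff (β i) ≠ 0 := by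
  constructor
  · rintro ⟨v, ⟨g, hgS, hgv⟩, hvi, hβv⟩
    have hg k := valC_eq_coe_iff.1 (hgv k)
    refine ⟨g, hgS, fun k j hj ↦ ?_, fun k ↦ (hg k).1, ?_⟩
    · exact HahnSeries.coeff_eq_zero_of_lt_order ((hg k).2 ▸ hj.trans_le (hβv k))
    · rw [← hvi, ← (hg i).2]
      exact fun h0 ↦ (hg i).1 (HahnSeries.coeff_order_eq_zero.1 h0)
  · rintro ⟨g, hgS, hgβ, hg0, hgi⟩
    have hβ k : β k ≤ (g k).order := (HahnSeries.le_order_iff_forall (hg0 k)).2 (hgβ k)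
    refine ⟨fun k ↦ (g k).order, ⟨g, hgS, fun k ↦ valC_eq_coe_iff.2 ⟨hg0 k, rfl⟩⟩, ?_, hβ⟩
    exact le_antisymm (HahnSeries.order_le_of_coeff_ne_zero hgi) (hβ i)

lemma exists_mem_stdMod_add_ne_zero {p : ℕ} (g : KK p) (γ : Fin p → ℤ) :
    ∃ h ∈ stdMod p γ, ∀ k, (g + h) k ≠ 0 ∧ (g k ≠ 0 → h k = 0) := by
  refine ⟨fun k ↦ if g k = 0 then HahnSeries.single (γ k) 1 else 0, fun k j hj ↦ ?_, fun k ↦ ?_⟩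
  · dsimp only
    split_ifs <;> simp [hj.ne]
  · by_cases hk : g k = 0 <;> simp [hk]

lemma lamSet_vals_nonempty_iff_exists_coeff_ne_zero {p : ℕ} {I : Submodule ℂ (KK p)}
    {ν : Fin p → ℤ} (hν : stdMod p ν ≤ I) (i : Fin p) (β : Fin p → ℤ) :
    (LamSet i β (vals (I : Set (KK p)))).Nonempty ↔
      ∃ g ∈ I ⊓ stdMod p β, (g i).coeff (β i) ≠ 0 := by
  rw [lamSet_vals_nonempty_iff]
  constructor
  · rintro ⟨g, hgI, hgβ, -, hgi⟩
    exact ⟨g, ⟨hgI, hgβ⟩, hgi⟩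
  · rintro ⟨g, ⟨hgI, hgβ⟩, hgi⟩
    obtain ⟨h, hh, hgh⟩ := exists_mem_stdMod_add_ne_zero g (ν ⊔ β)
    refine ⟨g + h, I.add_mem hgI (hν (stdMod_antitone le_sup_left hh)),
      add_mem hgβ (stdMod_antitone le_sup_right hh), fun k ↦ (hgh k).1, ?_⟩
    rwa [Pi.add_apply, (hgh i).2 (HahnSeries.ne_zero_of_coeff_ne_zero hgi), add_zero]

theorem dim_eq_card_lambda_steps_general {p : ℕ}
    (I : Submodule ℂ (KK p))
    (ν lam : Fin p → ℤ)
    (hν : (stdMod p ν : Set (KK p)) ⊆ (I : Set (KK p)))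
    (hlam : (I : Set (KK p)) ⊆ (stdMod p lam : Set (KK p)))
    (M : ℕ) (α : ℕ → Fin p → ℤ) (ii : ℕ → Fin p)
    (hα0 : α 0 = lam) (hαlast : α (M + 1) = ν)
    (hstep : ∀ j ≤ M, α (j + 1) = α j + Pi.single (ii j) 1) :
    qdim (stdMod p ν) I =
      ((Finset.range (M + 1)).filter
        (fun j => (LamSet (ii j) (α j) (vals (I : Set (KK p)))).Nonempty)).card := by
  have hS j (hj : j < M + 1) : stdMod p ν ≤ LinearMap.ker (coeffAt p (ii j) (α j (ii j))) :=
    stdMod_le_ker_coeffAt (hαlast ▸ chain_apply_lt_last hstep (by omega))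
  have hN j (hj : j < M + 1) : I ⊓ stdMod p (α (j + 1)) =
      I ⊓ stdMod p (α j) ⊓ LinearMap.ker (coeffAt p (ii j) (α j (ii j))) := by
    rw [hstep j (by omega), stdMod_add_single, inf_assoc]
  have hrank := (stdMod p ν).rank_map_mkQ_eq_add_card (fun j ↦ I ⊓ stdMod p (α j)) _ hS hN
  rw [hα0, hαlast, inf_eq_left.2 (SetLike.coe_subset_coe.1 hlam),
    inf_eq_right.2 (SetLike.coe_subset_coe.1 hν), Submodule.mkQ_map_self, rank_bot,
    zero_add] at hrank
  rw [qdim, Module.finrank_eq_of_rank_eq hrank]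
  congr 1
  refine Finset.filter_congr fun j _ ↦ ?_
  simp only [lamSet_vals_nonempty_iff_exists_coeff_ne_zero hν, coeffAt_apply]

/-- **Dimension along a chain**: `dim_ℂ (I / t^ν·O~)` counts the steps of the
chain at which `Λ_{i(j)}(α^{(j)}, val I)` is nonempty. -/
theorem dim_eq_card_lambda_steps {p : ℕ} (hp : 1 ≤ p) (O : Subalgebra ℂ (KK p))
    (hO : (O : Set (KK p)) ⊆ (stdMod p 0 : Set (KK p)))
    (I : Submodule ℂ (KK p)) (hI : IsFracIdeal O I)
    (ν lam : Fin p → ℤ)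
    (hν : (stdMod p ν : Set (KK p)) ⊆ (I : Set (KK p)))
    (hlam : (I : Set (KK p)) ⊆ (stdMod p lam : Set (KK p)))
    (M : ℕ) (α : ℕ → Fin p → ℤ) (ii : ℕ → Fin p)
    (hα0 : α 0 = lam) (hαlast : α (M + 1) = ν)
    (hstep : ∀ j ≤ M, α (j + 1) = α j + Pi.single (ii j) 1) :
    qdim (stdMod p ν) I =
      ((Finset.range (M + 1)).filter
        (fun j => (LamSet (ii j) (α j) (vals (I : Set (KK p)))).Nonempty)).card :=
  dim_eq_card_lambda_steps_general I ν lam hν hlam M α ii hα0 hαlast hstep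
end
end
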